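/- arXiv:1603.01958 — 6 statements merged into one kernel-verified Lean document; each statement's English description precedes it below -/
import Mathlib

section
/- Let A and B be finite types and let ρ be a density matrix on A × B. Let V : Matrix B B ℂ be a unitary matrix with columns v_m forming an orthonormal basis of ℂ^B, and define the measured state Π_V(ρ) = ∑_{m : B} (1_A ⊗ v_m v_m†) · ρ · (1_A ⊗ v_m v_m†). Then the total absolute entry sum of the measured state dominates that of the reduced state on A: ∑_{(i,j), (k,l)} ‖Π_V(ρ) (i,j) (k,l)‖ ≥ ∑_{i, k : A} ‖ρ_A i k‖. -/
open Matrix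
open scoped Kronecker ComplexOrder

lemma aux_left {A B : Type} [Fintype A] [DecidableEq A] [Fintype B] [DecidableEq B]
    (N : Matrix (A × B) (A × B) ℂ) (P : Matrix B B ℂ) (i : A) (j : B) (q : A × B) :
    (((1 : Matrix A A ℂ) ⊗ₖ P) * N) (i, j) q = ∑ b : B, P j b * N (i, b) q := by
  rw [Matrix.mul_apply, Fintype.sum_prod_type]
  rw [Finset.sum_comm]
  simp [Matrix.one_apply, ite_mul, zero_mul]

lemma aux_right {A B : Type} [Fintype A] [DecidableEq A] [Fintype B] [DecidableEq B]
    (N : Matrix (A × B) (A × B) ℂ) (Q : Matrix B B ℂ) (p : A × B) (k : A) (l : B) :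
    (N * ((1 : Matrix A A ℂ) ⊗ₖ Q)) p (k, l) = ∑ b : B, N p (k, b) * Q b l := by
  rw [Matrix.mul_apply, Fintype.sum_prod_type]
  rw [Finset.sum_comm]
  simp [Matrix.one_apply, mul_ite, mul_zero]

lemma aux_entry {A B : Type} [Fintype A] [DecidableEq A] [Fintype B] [DecidableEq B]
    (N : Matrix (A × B) (A × B) ℂ) (P Q : Matrix B B ℂ) (i k : A) (j l : B) :
    (((1 : Matrix A A ℂ) ⊗ₖ P) * N * ((1 : Matrix A A ℂ) ⊗ₖ Q)) (i, j) (k, l)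
      = ∑ b' : B, ∑ b : B, P j b * N (i, b) (k, b') * Q b' l := by
  rw [aux_right]
  refine Finset.sum_congr rfl fun b' _ => ?_
  rw [aux_left, Finset.sum_mul]

lemma aux_key {A B : Type} [Fintype A] [DecidableEq A] [Fintype B] [DecidableEq B]
    (ρ : Matrix (A × B) (A × B) ℂ)
    (V : Matrix B B ℂ) (hV : V ∈ Matrix.unitaryGroup B ℂ) (i k : A) :
    ∑ j : B, (∑ m : B,
        ((1 : Matrix A A ℂ) ⊗ₖ Matrix.of fun j l : B => V j m * star (V l m)) * ρ *
        ((1 : Matrix A A ℂ) ⊗ₖ Matrix.of fun j l : B => V j m * star (V l m))) (i, j) (k, j)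
      = ∑ j : B, ρ (i, j) (k, j) := by
  have hcol : ∀ m : B, ∑ j : B, V j m * star (V j m) = 1 := by
    intro m
    have h := congrFun (congrFun hV.1 m) m
    simp [Matrix.mul_apply, Matrix.one_apply, Matrix.conjTranspose_apply] at h
    rw [← h]
    exact Finset.sum_congr rfl fun j _ => mul_comm _ _
  have hrow : ∀ b b' : B, ∑ m : B, star (V b m) * V b' m = if b' = b then 1 else 0 := by
    intro b b'
    have h := congrFun (congrFun hV.2 b') b
    simp [Matrix.mul_apply, Matrix.one_apply, Matrix.conjTranspose_apply] at h
    rw [← h]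
    exact Finset.sum_congr rfl fun m _ => mul_comm _ _
  set C : B → ℂ := fun m => ∑ b' : B, ∑ b : B, star (V b m) * V b' m * ρ (i, b) (k, b') with hC
  calc ∑ j : B, (∑ m : B,
        ((1 : Matrix A A ℂ) ⊗ₖ Matrix.of fun j l : B => V j m * star (V l m)) * ρ *
        ((1 : Matrix A A ℂ) ⊗ₖ Matrix.of fun j l : B => V j m * star (V l m))) (i, j) (k, j)
      = ∑ j : B, ∑ m : B, (V j m * star (V j m)) * C m := by
        refine Finset.sum_congr rfl fun j _ => ?_
        rw [Matrix.sum_apply]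
        refine Finset.sum_congr rfl fun m _ => ?_
        rw [aux_entry, hC, Finset.mul_sum]
        refine Finset.sum_congr rfl fun b' _ => ?_
        rw [Finset.mul_sum]
        refine Finset.sum_congr rfl fun b _ => ?_
        simp only [Matrix.of_apply]
        ring
    _ = ∑ m : B, C m := by
        rw [Finset.sum_comm]
        refine Finset.sum_congr rfl fun m _ => ?_
        rw [← Finset.sum_mul, hcol, one_mul]
    _ = ∑ b' : B, ∑ b : B, (∑ m : B, star (V b m) * V b' m) * ρ (i, b) (k, b') := by
        rw [hC, Finset.sum_comm]
        refine Finset.sum_congr rfl fun b' _ => ?_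
        rw [Finset.sum_comm]
        refine Finset.sum_congr rfl fun b _ => ?_
        rw [Finset.sum_mul]
    _ = ∑ j : B, ρ (i, j) (k, j) := by
        simp only [hrow, ite_mul, one_mul, zero_mul]
        simp

/-- After a projective measurement of subsystem `B` onto an orthonormal basis
(the columns of a unitary `V`), the total absolute entry sum of the measured
state dominates the total absolute entry sum of the reduced state on `A`. -/
theorem stmt_3 {A B : Type} [Fintype A] [DecidableEq A] [Fintype B] [DecidableEq B]
    (ρ : Matrix (A × B) (A × B) ℂ) (hρ : ρ.PosSemidef) (htr : ρ.trace = 1)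
    (V : Matrix B B ℂ) (hV : V ∈ Matrix.unitaryGroup B ℂ) :
    ∑ i : A, ∑ k : A, ‖∑ j : B, ρ (i, j) (k, j)‖ ≤
      ∑ p : A × B, ∑ q : A × B,
        ‖(∑ m : B,
            ((1 : Matrix A A ℂ) ⊗ₖ Matrix.of fun j l : B => V j m * star (V l m)) * ρ *
            ((1 : Matrix A A ℂ) ⊗ₖ Matrix.of fun j l : B => V j m * star (V l m))) p q‖ := by
  set M : Matrix (A × B) (A × B) ℂ := ∑ m : B,
      ((1 : Matrix A A ℂ) ⊗ₖ Matrix.of fun j l : B => V j m * star (V l m)) * ρ *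
      ((1 : Matrix A A ℂ) ⊗ₖ Matrix.of fun j l : B => V j m * star (V l m)) with hM
  calc ∑ i : A, ∑ k : A, ‖∑ j : B, ρ (i, j) (k, j)‖
      = ∑ i : A, ∑ k : A, ‖∑ j : B, M (i, j) (k, j)‖ := by
        refine Finset.sum_congr rfl fun i _ => Finset.sum_congr rfl fun k _ => ?_
        rw [aux_key ρ V hV i k]
    _ ≤ ∑ i : A, ∑ k : A, ∑ j : B, ‖M (i, j) (k, j)‖ := by
        gcongr with i _ k _
        exact norm_sum_le _ _
    _ = ∑ i : A, ∑ j : B, ∑ k : A, ‖M (i, j) (k, j)‖ := by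
        refine Finset.sum_congr rfl fun i _ => ?_
        exact Finset.sum_comm
    _ ≤ ∑ i : A, ∑ j : B, ∑ k : A, ∑ l : B, ‖M (i, j) (k, l)‖ := by
        gcongr with i _ j _ k _
        exact Finset.single_le_sum (f := fun l => ‖M (i, j) (k, l)‖) (fun l _ => norm_nonneg _) (Finset.mem_univ j)
    _ = ∑ p : A × B, ∑ q : A × B, ‖M p q‖ := by
        rw [Fintype.sum_prod_type]
        refine Finset.sum_congr rfl fun i _ => Finset.sum_congr rfl fun j _ => ?_
        rw [Fintype.sum_prod_type]
end

section
/- Let A and B be finite types and let ρ be a density matrix on A × B. The following are equivalent: (i) there exist unitary matrices U_A : Matrix A A ℂ and U_B : Matrix B B ℂ such that U_A† ρ_A U_A and U_B† ρ_B U_B are diagonal (i.e., the columns of U_A and U_B are eigenbases of the reduced states) and C((U_A ⊗ U_B)† ρ (U_A ⊗ U_B)) = 0; (ii) there exist orthonormal families of vectors α : A → (A → ℂ) and β : B → (B → ℂ) and non-negative reals p : A × B → ℝ with ∑_{(i,j)} p (i,j) = 1 such that ρ = ∑_{(i,j)} p (i,j) · (α_i α_i†) ⊗ (β_j β_j†).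 That is, a state has zero correlated coherence with respect to the local eigenbases exactly when it has zero symmetric quantum discord. -/
/-!
Both conditions say that `ρ` is diagonal in a product basis:
`ρ = (UA ⊗ UB) * diagonal p * (UA ⊗ UB)ᴴ`. Vanishing coherence of `(UA ⊗ UB)ᴴ ρ (UA ⊗ UB)`
means exactly that this matrix is diagonal, and positivity and unit trace of `ρ` make its
diagonal a probability vector `p`; expanding `diagonal p` into rank-one projections onto the
columns of `UA ⊗ UB` gives the mixture form. Conversely, for such a `ρ` tracing out one factor
leaves `UA * diagonal (marginal of p) * UAᴴ`, because the columns of the other unitary have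
norm one, so the local bases diagonalise the reduced states.
-/

open Matrix
open scoped Kronecker ComplexOrder

/-- The `l₁`-coherence of a matrix with respect to the standard basis:
the sum of the absolute values of all off-diagonal entries. -/
noncomputable def coh {ι : Type} [Fintype ι] [DecidableEq ι] (M : Matrix ι ι ℂ) : ℝ :=
  ∑ i, ∑ j, if i ≠ j then ‖M i j‖ else 0

theorem coh_eq_zero_iff_isDiag {ι : Type} [Fintype ι] [DecidableEq ι] (M : Matrix ι ι ℂ) :
    coh M = 0 ↔ M.IsDiag := by
  have hterm : ∀ i j, 0 ≤ if i ≠ j then ‖M i j‖ else 0 := fun i j => by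
    split_ifs <;> simp
  rw [coh, Finset.sum_eq_zero_iff_of_nonneg fun i _ => Finset.sum_nonneg fun j _ => hterm i j]
  simp only [Finset.sum_eq_zero_iff_of_nonneg fun j _ => hterm _ j, Finset.mem_univ,
    forall_const, ite_eq_right_iff, norm_eq_zero, IsDiag, Pairwise]

namespace Matrix

section Unitary

variable {n R : Type*} [Fintype n] [DecidableEq n] [CommRing R] [StarRing R]

theorem mem_unitaryGroup_iff_orthonormal_cols {U : Matrix n n R} :
    U ∈ unitaryGroup n R ↔ ∀ i i', ∑ x, star (U x i) * U x i' = if i = i' then 1 else 0 := by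
  rw [mem_unitaryGroup_iff', ← Matrix.ext_iff]
  simp only [star_eq_conjTranspose, mul_apply, conjTranspose_apply, one_apply]

theorem conjTranspose_conj_cancel {U : Matrix n n R} (hU : U ∈ unitaryGroup n R)
    (D : Matrix n n R) : Uᴴ * (U * D * Uᴴ) * U = D := by
  have h : Uᴴ * U = 1 := Unitary.star_mul_self_of_mem hU
  rw [← Matrix.mul_assoc, ← Matrix.mul_assoc, h, Matrix.one_mul, Matrix.mul_assoc, h,
    Matrix.mul_one]

theorem conj_conjTranspose_cancel {U : Matrix n n R} (hU : U ∈ unitaryGroup n R)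
    (D : Matrix n n R) : U * (Uᴴ * D * U) * Uᴴ = D := by
  have h : U * Uᴴ = 1 := Unitary.mul_star_self_of_mem hU
  rw [← Matrix.mul_assoc, ← Matrix.mul_assoc, h, Matrix.one_mul, Matrix.mul_assoc, h,
    Matrix.mul_one]

theorem mul_diagonal_mul_conjTranspose_eq_sum {m : Type*} (U : Matrix m n R) (d : n → R) :
    U * diagonal d * Uᴴ = ∑ i, d i • vecMulVec (Uᵀ i) (star (Uᵀ i)) := by
  ext x y
  rw [mul_apply]
  simp only [mul_diagonal, conjTranspose_apply, sum_apply, smul_apply, vecMulVec_apply,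
    transpose_apply, Pi.star_apply, smul_eq_mul]
  exact Finset.sum_congr rfl fun i _ => by ring

theorem trace_vecMulVec_col_of_mem_unitaryGroup {U : Matrix n n R} (hU : U ∈ unitaryGroup n R)
    (i : n) :
    trace (vecMulVec (Uᵀ i) (star (Uᵀ i))) = 1 := by
  rw [trace_vecMulVec, dotProduct_comm]
  simpa [dotProduct] using mem_unitaryGroup_iff_orthonormal_cols.mp hU i i

theorem kronecker_mul_diagonal_mul_conjTranspose {m : Type*} [Fintype m] [DecidableEq m]
    (UA : Matrix n n R) (UB : Matrix m m R) (d : n × m → R) :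
    (UA ⊗ₖ UB) * diagonal d * (UA ⊗ₖ UB)ᴴ = ∑ ij, d ij •
      (vecMulVec (UAᵀ ij.1) (star (UAᵀ ij.1)) ⊗ₖ vecMulVec (UBᵀ ij.2) (star (UBᵀ ij.2))) := by
  rw [mul_diagonal_mul_conjTranspose_eq_sum]
  refine Finset.sum_congr rfl fun ij _ => ?_
  ext x y
  simp only [smul_apply, vecMulVec_apply, kroneckerMap_apply, transpose_apply, Pi.star_apply,
    star_mul', smul_eq_mul]
  ring

end Unitary

section PartialTrace

variable {l m n R : Type*}

def partialTraceRight [AddCommMonoid R] [Fintype n] (ρ : Matrix (l × n) (m × n) R) :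
    Matrix l m R :=
  of fun i k => ∑ j, ρ (i, j) (k, j)

def partialTraceLeft [AddCommMonoid R] [Fintype l] (ρ : Matrix (l × m) (l × n) R) :
    Matrix m n R :=
  of fun j k => ∑ i, ρ (i, j) (i, k)

variable [CommSemiring R] {ι : Type*} [Fintype ι]

theorem partialTraceRight_sum_smul_kronecker [Fintype n] (c : ι → R) (X : ι → Matrix l m R)
    (Y : ι → Matrix n n R) :
    partialTraceRight (∑ i, c i • (X i ⊗ₖ Y i)) = ∑ i, (c i * trace (Y i)) • X i := by
  ext x y
  simp only [partialTraceRight, of_apply, sum_apply, smul_apply, kroneckerMap_apply, trace,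
    diag_apply, smul_eq_mul, Finset.mul_sum, Finset.sum_mul]
  rw [Finset.sum_comm]
  exact Finset.sum_congr rfl fun i _ => Finset.sum_congr rfl fun j _ => by ring

theorem partialTraceLeft_sum_smul_kronecker [Fintype l] (c : ι → R) (X : ι → Matrix l l R)
    (Y : ι → Matrix m n R) :
    partialTraceLeft (∑ i, c i • (X i ⊗ₖ Y i)) = ∑ i, (c i * trace (X i)) • Y i := by
  ext x y
  simp only [partialTraceLeft, of_apply, sum_apply, smul_apply, kroneckerMap_apply, trace,
    diag_apply, smul_eq_mul, Finset.mul_sum, Finset.sum_mul]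
  rw [Finset.sum_comm]
  exact Finset.sum_congr rfl fun i _ => Finset.sum_congr rfl fun j _ => by ring

end PartialTrace

section ProductBasis

variable {m n R : Type*} [Fintype m] [DecidableEq m] [Fintype n] [DecidableEq n] [CommRing R]
  [StarRing R] {UA : Matrix m m R} {UB : Matrix n n R}

theorem partialTraceRight_kronecker_mul_diagonal_mul_conjTranspose
    (hUB : UB ∈ unitaryGroup n R) (d : m × n → R) :
    partialTraceRight ((UA ⊗ₖ UB) * diagonal d * (UA ⊗ₖ UB)ᴴ) =
      UA * diagonal (fun a => ∑ b, d (a, b)) * UAᴴ := by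
  rw [kronecker_mul_diagonal_mul_conjTranspose, partialTraceRight_sum_smul_kronecker,
    mul_diagonal_mul_conjTranspose_eq_sum]
  simp only [trace_vecMulVec_col_of_mem_unitaryGroup hUB, mul_one, Fintype.sum_prod_type,
    Finset.sum_smul]

theorem partialTraceLeft_kronecker_mul_diagonal_mul_conjTranspose
    (hUA : UA ∈ unitaryGroup m R) (d : m × n → R) :
    partialTraceLeft ((UA ⊗ₖ UB) * diagonal d * (UA ⊗ₖ UB)ᴴ) =
      UB * diagonal (fun b => ∑ a, d (a, b)) * UBᴴ := by
  rw [kronecker_mul_diagonal_mul_conjTranspose, partialTraceLeft_sum_smul_kronecker,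
    mul_diagonal_mul_conjTranspose_eq_sum]
  simp only [trace_vecMulVec_col_of_mem_unitaryGroup hUA, mul_one, Fintype.sum_prod_type_right,
    Finset.sum_smul]

end ProductBasis

theorem PosSemidef.exists_eq_mul_diagonal_mul_conjTranspose {n 𝕜 : Type*} [Fintype n]
    [DecidableEq n] [RCLike 𝕜] {ρ U : Matrix n n 𝕜} (hρ : ρ.PosSemidef) (htr : ρ.trace = 1)
    (hU : U ∈ unitaryGroup n 𝕜) (hdiag : (Uᴴ * ρ * U).IsDiag) :
    ∃ p : n → ℝ, (∀ i, 0 ≤ p i) ∧ ∑ i, p i = 1 ∧ ρ = U * diagonal (fun i => (p i : 𝕜)) * Uᴴ := by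
  set σ := Uᴴ * ρ * U
  have hσ : σ.PosSemidef := hρ.conjTranspose_mul_mul_same U
  have hσ_diag : diagonal (fun i => (RCLike.re (σ i i) : 𝕜)) = σ := by
    conv_rhs => rw [← hdiag.diagonal_diag]
    exact congrArg diagonal hσ.isHermitian.coe_re_diag
  have hσ_trace : σ.trace = 1 := by
    have hUU : U * Uᴴ = 1 := Unitary.mul_star_self_of_mem hU
    rw [trace_mul_cycle, hUU, Matrix.one_mul, htr]
  refine ⟨fun i => RCLike.re (σ i i), fun i => (RCLike.nonneg_iff.mp hσ.diag_nonneg).1, ?_, ?_⟩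
  · simpa [trace] using congrArg RCLike.re hσ_trace
  · rw [hσ_diag, conj_conjTranspose_cancel hU]

end Matrix

/-- A bipartite state has zero correlated coherence with respect to the local
eigenbases of its reduced states if and only if it has zero symmetric quantum
discord, i.e. it is a mixture of products of orthonormal local basis states. -/
theorem stmt_4 {A B : Type} [Fintype A] [DecidableEq A] [Fintype B] [DecidableEq B]
    (ρ : Matrix (A × B) (A × B) ℂ) (hρ : ρ.PosSemidef) (htr : ρ.trace = 1) :
    (∃ (UA : Matrix A A ℂ) (UB : Matrix B B ℂ),
      UA ∈ Matrix.unitaryGroup A ℂ ∧ UB ∈ Matrix.unitaryGroup B ℂ ∧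
      (UAᴴ * (Matrix.of fun i k : A => ∑ j : B, ρ (i, j) (k, j)) * UA).IsDiag ∧
      (UBᴴ * (Matrix.of fun j l : B => ∑ i : A, ρ (i, j) (i, l)) * UB).IsDiag ∧
      coh ((UA ⊗ₖ UB)ᴴ * ρ * (UA ⊗ₖ UB)) = 0) ↔
    (∃ (α : A → A → ℂ) (β : B → B → ℂ) (p : A × B → ℝ),
      (∀ i i', ∑ x, star (α i x) * α i' x = if i = i' then 1 else 0) ∧
      (∀ j j', ∑ x, star (β j x) * β j' x = if j = j' then 1 else 0) ∧
      (∀ ij, 0 ≤ p ij) ∧ (∑ ij, p ij) = 1 ∧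
      ρ = ∑ ij : A × B, (p ij : ℂ) •
        ((Matrix.of fun x y : A => α ij.1 x * star (α ij.1 y)) ⊗ₖ
          (Matrix.of fun x y : B => β ij.2 x * star (β ij.2 y)))) := by
  constructor
  · rintro ⟨UA, UB, hUA, hUB, -, -, hcoh⟩
    obtain ⟨p, hp_nonneg, hp_sum, hρ_eq⟩ := hρ.exists_eq_mul_diagonal_mul_conjTranspose htr
      (kronecker_mem_unitary hUA hUB) ((coh_eq_zero_iff_isDiag _).mp hcoh)
    refine ⟨fun i => UAᵀ i, fun j => UBᵀ j, p, mem_unitaryGroup_iff_orthonormal_cols.mp hUA,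
      mem_unitaryGroup_iff_orthonormal_cols.mp hUB, hp_nonneg, hp_sum, ?_⟩
    rw [hρ_eq, kronecker_mul_diagonal_mul_conjTranspose]
    rfl
  · rintro ⟨α, β, p, hα, hβ, -, -, hρ_eq⟩
    set UA : Matrix A A ℂ := (of α)ᵀ
    set UB : Matrix B B ℂ := (of β)ᵀ
    have hUA : UA ∈ unitaryGroup A ℂ := mem_unitaryGroup_iff_orthonormal_cols.mpr hα
    have hUB : UB ∈ unitaryGroup B ℂ := mem_unitaryGroup_iff_orthonormal_cols.mpr hβ
    have hρ_conj : ρ = (UA ⊗ₖ UB) * diagonal (fun ij => (p ij : ℂ)) * (UA ⊗ₖ UB)ᴴ := by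
      rw [kronecker_mul_diagonal_mul_conjTranspose]
      exact hρ_eq
    refine ⟨UA, UB, hUA, hUB, ?_, ?_, ?_⟩
    · change (UAᴴ * partialTraceRight ρ * UA).IsDiag
      rw [hρ_conj, partialTraceRight_kronecker_mul_diagonal_mul_conjTranspose hUB,
        conjTranspose_conj_cancel hUA]
      exact isDiag_diagonal _
    · change (UBᴴ * partialTraceLeft ρ * UB).IsDiag
      rw [hρ_conj, partialTraceLeft_kronecker_mul_diagonal_mul_conjTranspose hUA,
        conjTranspose_conj_cancel hUB]
      exact isDiag_diagonal _
    · rw [coh_eq_zero_iff_isDiag, hρ_conj,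
        conjTranspose_conj_cancel (kronecker_mem_unitary hUA hUB)]
      exact isDiag_diagonal _
end

section
/- Let A and B be finite types and let ρ be a density matrix on A × B whose reduced matrices ρ_A and ρ_B are both diagonal (so the standard basis is a local eigenbasis on each side). Define the local dephasing on A by Π_A(ρ) (i,j) (k,l) = if i = k then ρ (i,j) (k,l) else 0. Then C(ρ) = C(Π_A(ρ)) if and only if there exist non-negative reals p : A → ℝ with ∑_i p i = 1 and density matrices σ : A → Matrix B B ℂ such that ρ (i,j) (k,l) = if i = k then p i · (σ i) j l else 0 (i.e., ρ = ∑_i p i · E_{ii} ⊗ σ_i, a classical-quantum state with zero asymmetric quantum discord). -/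
open Matrix
open scoped ComplexOrder

/-!
Local dephasing of `A` only deletes the entries `ρ (i, j) (k, l)` with `i ≠ k`, so
`C(ρ) - C(Π_A ρ)` is the `ℓ₁`-mass of these entries, and equality forces `ρ` to be block
diagonal. Each diagonal block `ρ (i, ·) (i, ·)` is a principal submatrix of `ρ`, hence positive
semidefinite, so it is `p i • σ i` with `p i` its trace and `σ i` a density matrix.
-/

namespace Matrix.PosSemidef

variable {n : Type*} [Fintype n] [DecidableEq n]

lemma exists_nonneg_smul_trace_one [Nonempty n] {T : Matrix n n ℂ} (hT : T.PosSemidef) :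
    ∃ c : ℝ, 0 ≤ c ∧ ∃ σ : Matrix n n ℂ, σ.PosSemidef ∧ σ.trace = 1 ∧ T = (c : ℂ) • σ := by
  obtain ⟨c, hc⟩ : ∃ c : ℝ, T.trace = c :=
    ⟨_, Complex.eq_re_of_ofReal_le (r := 0) (by simpa using hT.trace_nonneg)⟩
  have hc0 : 0 ≤ c := by simpa [hc] using hT.trace_nonneg
  rcases hc0.eq_or_lt with rfl | hcpos
  · refine ⟨0, le_rfl, (Fintype.card n : ℝ)⁻¹ • 1, PosSemidef.one.smul (by positivity), ?_, ?_⟩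
    · simp [trace_smul]
    · simpa using hT.trace_eq_zero_iff.mp (by simpa using hc)
  · refine ⟨c, hc0, c⁻¹ • T, hT.smul (inv_nonneg.mpr hc0), ?_, ?_⟩
    · simp [trace_smul, hc, hcpos.ne']
    · ext i j; simp [hcpos.ne']

end Matrix.PosSemidef

section Dephasing

variable {A B : Type} [Fintype A] [DecidableEq A] [Fintype B] [DecidableEq B]

/-- The local dephasing `Π_A` in the standard basis of `A`. -/
def dephaseLeft (M : Matrix (A × B) (A × B) ℂ) : Matrix (A × B) (A × B) ℂ :=
  Matrix.of fun p q => if p.1 = q.1 then M p q else 0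

lemma coh_eq_coh_dephaseLeft_add (M : Matrix (A × B) (A × B) ℂ) :
    coh M = coh (dephaseLeft M) + ∑ p, ∑ q, if p.1 ≠ q.1 then ‖M p q‖ else 0 := by
  simp only [coh, ← Finset.sum_add_distrib]
  refine Fintype.sum_congr _ _ fun p => Fintype.sum_congr _ _ fun q => ?_
  by_cases h : p.1 = q.1
  · simp [dephaseLeft, h]
  · simp [dephaseLeft, h, show p ≠ q from fun e => h (congrArg Prod.fst e)]

lemma coh_eq_coh_dephaseLeft_iff (M : Matrix (A × B) (A × B) ℂ) :
    coh M = coh (dephaseLeft M) ↔ ∀ p q, p.1 ≠ q.1 → M p q = 0 := by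
  rw [coh_eq_coh_dephaseLeft_add, add_eq_left,
    Finset.sum_eq_zero_iff_of_nonneg fun p _ => Finset.sum_nonneg fun q _ => by positivity]
  refine forall_congr' fun p => ?_
  rw [Finset.sum_eq_zero_iff_of_nonneg fun q _ => by positivity]
  simp only [Finset.mem_univ, true_implies]
  refine forall_congr' fun q => ?_
  by_cases h : p.1 = q.1 <;> simp [h]

lemma exists_classicalQuantum_of_offBlock_eq_zero {ρ : Matrix (A × B) (A × B) ℂ}
    (hρ : ρ.PosSemidef) (htr : ρ.trace = 1) (hblock : ∀ p q : A × B, p.1 ≠ q.1 → ρ p q = 0) :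
    ∃ (p : A → ℝ) (σ : A → Matrix B B ℂ),
      (∀ i, 0 ≤ p i) ∧ (∑ i, p i) = 1 ∧
      (∀ i, (σ i).PosSemidef ∧ (σ i).trace = 1) ∧
      ∀ i j k l, ρ (i, j) (k, l) = if i = k then (p i : ℂ) * σ i j l else 0 := by
  have : Nonempty B := by
    by_contra h
    rw [not_nonempty_iff] at h
    simp [trace_eq_zero_of_isEmpty] at htr
  choose p hp σ hσ hσtr hρσ using fun i : A =>
    (hρ.submatrix fun j : B => (i, j)).exists_nonneg_smul_trace_one
  have hentry : ∀ i j l, ρ (i, j) (i, l) = p i * σ i j l := fun i j l => by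
    simpa using congr_fun₂ (hρσ i) j l
  refine ⟨p, σ, hp, ?_, fun i => ⟨hσ i, hσtr i⟩, fun i j k l => ?_⟩
  · have : ρ.trace = ∑ i, (p i : ℂ) := by
      simp only [trace, diag, Fintype.sum_prod_type, hentry, ← Finset.mul_sum]
      exact Fintype.sum_congr _ _ fun i => by
        simpa [trace] using congrArg ((p i : ℂ) * ·) (hσtr i)
    exact_mod_cast this.symm.trans htr
  · split_ifs with h
    · exact h ▸ hentry i j l
    · exact hblock _ _ h

end Dephasing

theorem stmt_5_general {A B : Type} [Fintype A] [DecidableEq A] [Fintype B] [DecidableEq B]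
    (ρ : Matrix (A × B) (A × B) ℂ) (hρ : ρ.PosSemidef) (htr : ρ.trace = 1) :
    coh ρ = coh (Matrix.of fun p q : A × B => if p.1 = q.1 then ρ p q else 0) ↔
    (∃ (p : A → ℝ) (σ : A → Matrix B B ℂ),
      (∀ i, 0 ≤ p i) ∧ (∑ i, p i) = 1 ∧
      (∀ i, (σ i).PosSemidef ∧ (σ i).trace = 1) ∧
      ∀ i j k l, ρ (i, j) (k, l) = if i = k then (p i : ℂ) * σ i j l else 0) := by
  refine (coh_eq_coh_dephaseLeft_iff ρ).trans
    ⟨exists_classicalQuantum_of_offBlock_eq_zero hρ htr, ?_⟩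
  rintro ⟨p, σ, -, -, -, hρ_eq⟩ ⟨i, j⟩ ⟨k, l⟩ hik
  simp [hρ_eq, hik]

/-- For a bipartite state whose reduced states are diagonal in the reference
bases, the coherence is unchanged by the local dephasing of `A` if and only
if the state is a classical-quantum state `∑ i, p i • E_{ii} ⊗ σ i`
(i.e. it has zero asymmetric quantum discord). -/
theorem stmt_5 {A B : Type} [Fintype A] [DecidableEq A] [Fintype B] [DecidableEq B]
    (ρ : Matrix (A × B) (A × B) ℂ) (hρ : ρ.PosSemidef) (htr : ρ.trace = 1)
    (hA : (Matrix.of fun i k : A => ∑ j : B, ρ (i, j) (k, j)).IsDiag)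
    (hB : (Matrix.of fun j l : B => ∑ i : A, ρ (i, j) (i, l)).IsDiag) :
    coh ρ = coh (Matrix.of fun p q : A × B => if p.1 = q.1 then ρ p q else 0) ↔
    (∃ (p : A → ℝ) (σ : A → Matrix B B ℂ),
      (∀ i, 0 ≤ p i) ∧ (∑ i, p i) = 1 ∧
      (∀ i, (σ i).PosSemidef ∧ (σ i).trace = 1) ∧
      ∀ i j k l, ρ (i, j) (k, l) = if i = k then (p i : ℂ) * σ i j l else 0) :=
  stmt_5_general ρ hρ htr
end

section
/- Let A and B be finite types, let ρ be a density matrix on A × B, and let U_A, V_A : Matrix A A ℂ and U_B, V_B : Matrix B B ℂ be unitary matrices such that V_A† ρ_A V_A and V_B† ρ_B V_B are diagonal. Set ρ' = (U_A ⊗ U_B) ρ (U_A ⊗ U_B)†. Then (U_A V_A)† ρ'_A (U_A V_A) and (U_B V_B)† ρ'_B (U_B V_B) are diagonal (so the columns of U_A V_A and U_B V_B form local eigenbases of ρ'), and the coherence with respect to these eigenbases is unchanged: C((V_A ⊗ V_B)† ρ (V_A ⊗ V_B)) = C(((U_A V_A) ⊗ (U_B V_B))† ρ' ((U_A V_A)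 ⊗ (U_B V_B))). In other words, the correlated coherence computed in the local eigenbases is invariant under local unitary operations. -/
open Matrix
open scoped Kronecker ComplexOrder

lemma kronCT' {A B : Type} [Fintype A] [Fintype B]
    (U : Matrix A A ℂ) (X : Matrix B B ℂ) : (U ⊗ₖ X)ᴴ = Uᴴ ⊗ₖ Xᴴ := by
  ext ⟨a, b⟩ ⟨c, d⟩
  simp [conjTranspose_apply, kroneckerMap_apply, star_mul', mul_comm]


lemma ptA {A B : Type} [Fintype A] [DecidableEq A] [Fintype B] [DecidableEq B]
    (ρ : Matrix (A × B) (A × B) ℂ) (UA : Matrix A A ℂ) (UB : Matrix B B ℂ)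
    (hUB : UBᴴ * UB = 1) :
    (Matrix.of fun i k : A => ∑ j : B, ((UA ⊗ₖ UB) * ρ * (UA ⊗ₖ UB)ᴴ) (i, j) (k, j))
      = UA * (Matrix.of fun i k : A => ∑ j : B, ρ (i, j) (k, j)) * UAᴴ := by
  have h1 : ∀ b d : B, (∑ j, UB j b * star (UB j d)) = if d = b then 1 else 0 := by
    intro b d
    have := congrFun (congrFun hUB d) b
    simp only [mul_apply, conjTranspose_apply, one_apply] at this
    rw [← this]
    exact Finset.sum_congr rfl fun j _ => mul_comm _ _
  ext i k
  simp only [of_apply, mul_apply, conjTranspose_apply, kroneckerMap_apply,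
    Fintype.sum_prod_type, Finset.sum_mul, Finset.mul_sum, star_mul']
  rw [Finset.sum_comm]
  refine Finset.sum_congr rfl fun c _ => ?_
  calc ∑ j : B, ∑ d : B, ∑ a : A, ∑ b : B,
        UA i a * UB j b * ρ (a, b) (c, d) * (star (UA k c) * star (UB j d))
      = ∑ d : B, ∑ j : B, ∑ a : A, ∑ b : B,
        UA i a * UB j b * ρ (a, b) (c, d) * (star (UA k c) * star (UB j d)) :=
        Finset.sum_comm
    _ = ∑ d : B, ∑ a : A, ∑ j : B, ∑ b : B,
        UA i a * UB j b * ρ (a, b) (c, d) * (star (UA k c) * star (UB j d)) :=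
        Finset.sum_congr rfl fun d _ => Finset.sum_comm
    _ = ∑ a : A, ∑ d : B, ∑ j : B, ∑ b : B,
        UA i a * UB j b * ρ (a, b) (c, d) * (star (UA k c) * star (UB j d)) :=
        Finset.sum_comm
    _ = ∑ a : A, ∑ d : B, ∑ b : B, ∑ j : B,
        UA i a * UB j b * ρ (a, b) (c, d) * (star (UA k c) * star (UB j d)) :=
        Finset.sum_congr rfl fun a _ => Finset.sum_congr rfl fun d _ => Finset.sum_comm
    _ = ∑ a : A, ∑ b : B, ∑ d : B, ∑ j : B,
        UA i a * UB j b * ρ (a, b) (c, d) * (star (UA k c) * star (UB j d)) :=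
        Finset.sum_congr rfl fun a _ => Finset.sum_comm
    _ = ∑ a : A, ∑ b : B, UA i a * ρ (a, b) (c, b) * star (UA k c) := by
        refine Finset.sum_congr rfl fun a _ => Finset.sum_congr rfl fun b _ => ?_
        have : ∀ d : B, (∑ j : B,
            UA i a * UB j b * ρ (a, b) (c, d) * (star (UA k c) * star (UB j d)))
            = (UA i a * ρ (a, b) (c, d) * star (UA k c)) * (if d = b then 1 else 0) := by
          intro d
          rw [← h1 b d, Finset.mul_sum]
          exact Finset.sum_congr rfl fun j _ => by ring
        refine (Finset.sum_congr rfl fun d _ => this d).trans ?_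
        simp



lemma ptB {A B : Type} [Fintype A] [DecidableEq A] [Fintype B] [DecidableEq B]
    (ρ : Matrix (A × B) (A × B) ℂ) (UA : Matrix A A ℂ) (UB : Matrix B B ℂ)
    (hUA : UAᴴ * UA = 1) :
    (Matrix.of fun j l : B => ∑ i : A, ((UA ⊗ₖ UB) * ρ * (UA ⊗ₖ UB)ᴴ) (i, j) (i, l))
      = UB * (Matrix.of fun j l : B => ∑ i : A, ρ (i, j) (i, l)) * UBᴴ := by
  have h1 : ∀ a c : A, (∑ i, UA i a * star (UA i c)) = if c = a then 1 else 0 := by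
    intro a c
    have := congrFun (congrFun hUA c) a
    simp only [mul_apply, conjTranspose_apply, one_apply] at this
    rw [← this]
    exact Finset.sum_congr rfl fun i _ => mul_comm _ _
  ext j l
  simp only [of_apply, mul_apply, conjTranspose_apply, kroneckerMap_apply,
    Fintype.sum_prod_type, Finset.sum_mul, Finset.mul_sum, star_mul']
  calc ∑ i : A, ∑ c : A, ∑ d : B, ∑ a : A, ∑ b : B,
        UA i a * UB j b * ρ (a, b) (c, d) * (star (UA i c) * star (UB l d))
      = ∑ c : A, ∑ i : A, ∑ d : B, ∑ a : A, ∑ b : B,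
        UA i a * UB j b * ρ (a, b) (c, d) * (star (UA i c) * star (UB l d)) :=
        Finset.sum_comm
    _ = ∑ c : A, ∑ d : B, ∑ i : A, ∑ a : A, ∑ b : B,
        UA i a * UB j b * ρ (a, b) (c, d) * (star (UA i c) * star (UB l d)) :=
        Finset.sum_congr rfl fun _ _ => Finset.sum_comm
    _ = ∑ c : A, ∑ d : B, ∑ a : A, ∑ i : A, ∑ b : B,
        UA i a * UB j b * ρ (a, b) (c, d) * (star (UA i c) * star (UB l d)) :=
        Finset.sum_congr rfl fun _ _ => Finset.sum_congr rfl fun _ _ => Finset.sum_comm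
    _ = ∑ c : A, ∑ d : B, ∑ a : A, ∑ b : B, ∑ i : A,
        UA i a * UB j b * ρ (a, b) (c, d) * (star (UA i c) * star (UB l d)) :=
        Finset.sum_congr rfl fun _ _ => Finset.sum_congr rfl fun _ _ =>
          Finset.sum_congr rfl fun _ _ => Finset.sum_comm
    _ = ∑ d : B, ∑ c : A, ∑ a : A, ∑ b : B, ∑ i : A,
        UA i a * UB j b * ρ (a, b) (c, d) * (star (UA i c) * star (UB l d)) :=
        Finset.sum_comm
    _ = ∑ d : B, ∑ a : A, ∑ c : A, ∑ b : B, ∑ i : A,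
        UA i a * UB j b * ρ (a, b) (c, d) * (star (UA i c) * star (UB l d)) :=
        Finset.sum_congr rfl fun _ _ => Finset.sum_comm
    _ = ∑ d : B, ∑ a : A, ∑ b : B, ∑ c : A, ∑ i : A,
        UA i a * UB j b * ρ (a, b) (c, d) * (star (UA i c) * star (UB l d)) :=
        Finset.sum_congr rfl fun _ _ => Finset.sum_congr rfl fun _ _ => Finset.sum_comm
    _ = ∑ d : B, ∑ b : B, ∑ a : A, ∑ c : A, ∑ i : A,
        UA i a * UB j b * ρ (a, b) (c, d) * (star (UA i c) * star (UB l d)) :=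
        Finset.sum_congr rfl fun _ _ => Finset.sum_comm
    _ = ∑ d : B, ∑ b : B, ∑ a : A, UB j b * ρ (a, b) (a, d) * star (UB l d) := by
        refine Finset.sum_congr rfl fun d _ => Finset.sum_congr rfl fun b _ =>
          Finset.sum_congr rfl fun a _ => ?_
        have h2 : ∀ c : A, (∑ i : A,
            UA i a * UB j b * ρ (a, b) (c, d) * (star (UA i c) * star (UB l d)))
            = (UB j b * ρ (a, b) (c, d) * star (UB l d)) * (if c = a then 1 else 0) := by
          intro c
          rw [← h1 a c, Finset.mul_sum]
          exact Finset.sum_congr rfl fun i _ => by ring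
        refine (Finset.sum_congr rfl fun c _ => h2 c).trans ?_
        simp


/-- The correlated coherence computed in the local eigenbases is invariant
under local unitary operations: if the columns of `VA`, `VB` are local
eigenbases of `ρ`, then the columns of `UA * VA`, `UB * VB` are local
eigenbases of `ρ' = (UA ⊗ UB) ρ (UA ⊗ UB)†`, and the coherence with respect
to these eigenbases is unchanged. -/
theorem stmt_8 {A B : Type} [Fintype A] [DecidableEq A] [Fintype B] [DecidableEq B]
    (ρ : Matrix (A × B) (A × B) ℂ) (hρ : ρ.PosSemidef) (htr : ρ.trace = 1)
    (UA VA : Matrix A A ℂ) (UB VB : Matrix B B ℂ)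
    (hUA : UA ∈ Matrix.unitaryGroup A ℂ) (hVA : VA ∈ Matrix.unitaryGroup A ℂ)
    (hUB : UB ∈ Matrix.unitaryGroup B ℂ) (hVB : VB ∈ Matrix.unitaryGroup B ℂ)
    (hdA : (VAᴴ * (Matrix.of fun i k : A => ∑ j : B, ρ (i, j) (k, j)) * VA).IsDiag)
    (hdB : (VBᴴ * (Matrix.of fun j l : B => ∑ i : A, ρ (i, j) (i, l)) * VB).IsDiag) :
    ((UA * VA)ᴴ *
        (Matrix.of fun i k : A => ∑ j : B,
          ((UA ⊗ₖ UB) * ρ * (UA ⊗ₖ UB)ᴴ) (i, j) (k, j)) * (UA * VA)).IsDiag ∧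
    ((UB * VB)ᴴ *
        (Matrix.of fun j l : B => ∑ i : A,
          ((UA ⊗ₖ UB) * ρ * (UA ⊗ₖ UB)ᴴ) (i, j) (i, l)) * (UB * VB)).IsDiag ∧
    coh ((VA ⊗ₖ VB)ᴴ * ρ * (VA ⊗ₖ VB)) =
      coh (((UA * VA) ⊗ₖ (UB * VB))ᴴ * ((UA ⊗ₖ UB) * ρ * (UA ⊗ₖ UB)ᴴ) *
        ((UA * VA) ⊗ₖ (UB * VB))) := by
  have hUA' : UAᴴ * UA = 1 := Matrix.mem_unitaryGroup_iff'.mp hUA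
  have hUB' : UBᴴ * UB = 1 := Matrix.mem_unitaryGroup_iff'.mp hUB
  refine ⟨?_, ?_, ?_⟩
  · rw [ptA ρ UA UB hUB']
    have : (UA * VA)ᴴ *
        (UA * (Matrix.of fun i k : A => ∑ j : B, ρ (i, j) (k, j)) * UAᴴ) * (UA * VA)
        = VAᴴ * (Matrix.of fun i k : A => ∑ j : B, ρ (i, j) (k, j)) * VA := by
      rw [conjTranspose_mul]
      calc VAᴴ * UAᴴ * (UA * (Matrix.of fun i k : A => ∑ j : B, ρ (i, j) (k, j)) * UAᴴ) *
            (UA * VA)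
          = VAᴴ * ((UAᴴ * UA) * (Matrix.of fun i k : A => ∑ j : B, ρ (i, j) (k, j)) *
            (UAᴴ * UA)) * VA := by noncomm_ring
        _ = _ := by rw [hUA']; simp [Matrix.mul_assoc]
    rw [this]; exact hdA
  · rw [ptB ρ UA UB hUA']
    have : (UB * VB)ᴴ *
        (UB * (Matrix.of fun j l : B => ∑ i : A, ρ (i, j) (i, l)) * UBᴴ) * (UB * VB)
        = VBᴴ * (Matrix.of fun j l : B => ∑ i : A, ρ (i, j) (i, l)) * VB := by
      rw [conjTranspose_mul]
      calc VBᴴ * UBᴴ * (UB * (Matrix.of fun j l : B => ∑ i : A, ρ (i, j) (i, l)) * UBᴴ) *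
            (UB * VB)
          = VBᴴ * ((UBᴴ * UB) * (Matrix.of fun j l : B => ∑ i : A, ρ (i, j) (i, l)) *
            (UBᴴ * UB)) * VB := by noncomm_ring
        _ = _ := by rw [hUB']; simp [Matrix.mul_assoc]
    rw [this]; exact hdB
  · have key : ((UA * VA) ⊗ₖ (UB * VB))ᴴ * ((UA ⊗ₖ UB) * ρ * (UA ⊗ₖ UB)ᴴ) *
        ((UA * VA) ⊗ₖ (UB * VB)) = (VA ⊗ₖ VB)ᴴ * ρ * (VA ⊗ₖ VB) := by
      have hu : (UA ⊗ₖ UB)ᴴ * (UA ⊗ₖ UB) = 1 := by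
        rw [kronCT', ← Matrix.mul_kronecker_mul, hUA', hUB', Matrix.one_kronecker_one]
      rw [Matrix.mul_kronecker_mul, conjTranspose_mul]
      calc (VA ⊗ₖ VB)ᴴ * (UA ⊗ₖ UB)ᴴ * ((UA ⊗ₖ UB) * ρ * (UA ⊗ₖ UB)ᴴ) *
            ((UA ⊗ₖ UB) * (VA ⊗ₖ VB))
          = (VA ⊗ₖ VB)ᴴ * (((UA ⊗ₖ UB)ᴴ * (UA ⊗ₖ UB)) * ρ *
            ((UA ⊗ₖ UB)ᴴ * (UA ⊗ₖ UB))) * (VA ⊗ₖ VB) := by noncomm_ring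
        _ = _ := by rw [hu]; simp [Matrix.mul_assoc]
    rw [key]
end

section
/- Let A and B be finite types, let ρ and σ be density matrices on A × B whose reduced matrices ρ_A, ρ_B, σ_A, σ_B are all diagonal, and let λ be a real number with 0 ≤ λ ≤ 1. Define τ on (A × Fin 2) × (B × Fin 2) by: τ ((a,x),(b,y)) ((c,x'),(d,y')) = λ · ρ (a,b) (c,d) if x = x' = y = y' = 0; (1−λ) · σ (a,b) (c,d) if x = x' = y = y' = 1; and 0 otherwise (i.e., τ = λ ρ ⊗ |0,0⟩⟨0,0| + (1−λ) σ ⊗ |1,1⟩⟨1,1| with classical flag registers appended to each side). Then τ is a density matrix, the reduced matrices of τ on A × Fin 2 and on B × Fin 2 are diagonal, and C(τ) = λ · C(ρ) + (1−λ) · C(σ). -/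
/-!
With `M.flagged k` denoting `M ⊗ |k,k⟩⟨k,k|`, regrouped so that each flag sits with its party,
`τ = l • ρ.flagged 0 + (1 - l) • σ.flagged 1`. Flagging preserves positivity, trace and
coherence, and turns the reduced matrices into `ρ_A ⊗ |k⟩⟨k|` and `ρ_B ⊗ |k⟩⟨k|`, which stay
diagonal. The two flagged summands have disjoint supports, so the `l₁`-coherence, a sum of
moduli of entries, is additive on them.
-/

open Matrix
open scoped ComplexOrder

open scoped Kronecker

namespace Matrix

variable {R : Type*} {A B F : Type}

def traceRight [AddCommMonoid R] [Fintype B] (M : Matrix (A × B) (A × B) R) : Matrix A A R :=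
  of fun i k => ∑ j, M (i, j) (k, j)

def traceLeft [AddCommMonoid R] [Fintype A] (M : Matrix (A × B) (A × B) R) : Matrix B B R :=
  of fun j l => ∑ i, M (i, j) (i, l)

theorem traceRight_add [AddCommMonoid R] [Fintype B] (M N : Matrix (A × B) (A × B) R) :
    (M + N).traceRight = M.traceRight + N.traceRight := by
  ext; simp [traceRight, Finset.sum_add_distrib]

theorem traceRight_smul {S : Type*} [AddCommMonoid R] [DistribSMul S R] [Fintype B] (c : S)
    (M : Matrix (A × B) (A × B) R) : (c • M).traceRight = c • M.traceRight := by
  ext; simp [traceRight, Finset.smul_sum]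

theorem traceLeft_add [AddCommMonoid R] [Fintype A] (M N : Matrix (A × B) (A × B) R) :
    (M + N).traceLeft = M.traceLeft + N.traceLeft := by
  ext; simp [traceLeft, Finset.sum_add_distrib]

theorem traceLeft_smul {S : Type*} [AddCommMonoid R] [DistribSMul S R] [Fintype A] (c : S)
    (M : Matrix (A × B) (A × B) R) : (c • M).traceLeft = c • M.traceLeft := by
  ext; simp [traceLeft, Finset.smul_sum]

section flagged

variable [DecidableEq F] [Semiring R]

def flagged (k : F) (M : Matrix (A × B) (A × B) R) :
    Matrix ((A × F) × (B × F)) ((A × F) × (B × F)) R :=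
  (M ⊗ₖ diagonal (Pi.single (k, k) 1)).submatrix (Equiv.prodProdProdComm A F B F)
    (Equiv.prodProdProdComm A F B F)

theorem flagged_apply (k : F) (M : Matrix (A × B) (A × B) R) (p q : (A × F) × (B × F)) :
    flagged k M p q = if p.1.2 = k ∧ p.2.2 = k ∧ q.1.2 = k ∧ q.2.2 = k then
      M (p.1.1, p.2.1) (q.1.1, q.2.1) else 0 := by
  simp only [flagged, submatrix_apply, kroneckerMap_apply, Equiv.prodProdProdComm_apply,
    diagonal_apply, Pi.single_apply, Prod.ext_iff]
  grind

theorem PosSemidef.flagged [Fintype A] [Fintype B] [Fintype F] {M : Matrix (A × B) (A × B) ℂ}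
    (hM : M.PosSemidef) (k : F) : (M.flagged k).PosSemidef :=
  (hM.kronecker (PosSemidef.diagonal (Pi.single_nonneg.2 zero_le_one))).submatrix _

theorem trace_flagged [Fintype A] [Fintype B] [Fintype F] (k : F) (M : Matrix (A × B) (A × B) R) :
    (M.flagged k).trace = M.trace := by
  calc (M.flagged k).trace = (M ⊗ₖ diagonal (Pi.single (k, k) 1)).trace := by
        simp only [flagged, trace, diag_apply, submatrix_apply]
        exact (Equiv.prodProdProdComm A F B F).sum_comp fun i => (M ⊗ₖ _) i i
    _ = M.trace := by simp [trace_kronecker]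

theorem traceRight_flagged [Fintype B] [Fintype F] (k : F) (M : Matrix (A × B) (A × B) R) :
    (M.flagged k).traceRight = M.traceRight ⊗ₖ diagonal (Pi.single k 1) := by
  ext ⟨a, x⟩ ⟨c, x'⟩
  by_cases hx : x = k <;> by_cases hx' : x' = k <;>
    simp [traceRight, flagged_apply, Fintype.sum_prod_type, diagonal_apply, hx, hx',
      eq_comm (a := k)]

theorem traceLeft_flagged [Fintype A] [Fintype F] (k : F) (M : Matrix (A × B) (A × B) R) :
    (M.flagged k).traceLeft = M.traceLeft ⊗ₖ diagonal (Pi.single k 1) := by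
  ext ⟨b, y⟩ ⟨d, y'⟩
  by_cases hy : y = k <;> by_cases hy' : y' = k <;>
    simp [traceLeft, flagged_apply, Fintype.sum_prod_type, diagonal_apply, hy, hy',
      eq_comm (a := k)]

theorem flagged_apply_eq_zero_or {k k' : F} (hk : k ≠ k') (M N : Matrix (A × B) (A × B) R)
    (p q : (A × F) × (B × F)) : M.flagged k p q = 0 ∨ N.flagged k' p q = 0 := by
  simp only [flagged_apply]
  by_cases hp : p.1.2 = k
  · exact .inr (if_neg fun h => hk (hp ▸ h.1))
  · exact .inl (if_neg fun h => hp h.1)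

end flagged
end Matrix

section coh

variable {ι κ : Type} [Fintype ι] [DecidableEq ι] [Fintype κ] [DecidableEq κ]

theorem coh_submatrix_of_injective {e : ι → κ} (he : e.Injective) {N : Matrix κ κ ℂ}
    (hN : ∀ p q, N p q ≠ 0 → p ∈ Set.range e ∧ q ∈ Set.range e) :
    coh (N.submatrix e e) = coh N := by
  refine Fintype.sum_of_injective e he _ _ (fun p hp => ?_) fun i => ?_
  · refine Finset.sum_eq_zero fun q _ => ?_
    rw [ite_eq_right_iff, norm_eq_zero]
    exact fun _ => not_imp_comm.1 (fun h => (hN p q h).1) hp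
  · refine Fintype.sum_of_injective e he _ _ (fun q hq => ?_) fun j => ?_
    · rw [ite_eq_right_iff, norm_eq_zero]
      exact fun _ => not_imp_comm.1 (fun h => (hN (e i) q h).2) hq
    · simp [he.ne_iff]

theorem coh_smul (c : ℝ) (M : Matrix ι ι ℂ) : coh (c • M) = |c| * coh M := by
  simp [coh, Finset.mul_sum, mul_ite]

theorem coh_add_of_disjoint {M N : Matrix ι ι ℂ} (h : ∀ i j, M i j = 0 ∨ N i j = 0) :
    coh (M + N) = coh M + coh N := by
  simp only [coh, ← Finset.sum_add_distrib]
  refine Fintype.sum_congr _ _ fun i => Fintype.sum_congr _ _ fun j => ?_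
  split_ifs
  · rcases h i j with h | h <;> simp [h]
  · rw [add_zero]

theorem coh_flagged {A B F : Type} [Fintype A] [DecidableEq A] [Fintype B] [DecidableEq B]
    [Fintype F] [DecidableEq F] (k : F) (M : Matrix (A × B) (A × B) ℂ) :
    coh (M.flagged k) = coh M := by
  have he : (fun r : A × B => ((r.1, k), (r.2, k))).Injective := fun r s h => by
    simpa [Prod.ext_iff] using h
  rw [← coh_submatrix_of_injective he]
  · congr 1
    ext r s
    simp [flagged_apply]
  · intro p q h
    rw [flagged_apply] at h
    split_ifs at h with hpq
    · obtain ⟨h1, h2, h3, h4⟩ := hpq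
      exact ⟨⟨(p.1.1, p.2.1), by simp [Prod.ext_iff, h1, h2]⟩,
        ⟨(q.1.1, q.2.1), by simp [Prod.ext_iff, h3, h4]⟩⟩
    · exact absurd rfl h

end coh

/-- Appending classical flag registers to each side, the flagged mixture
`τ = λ ρ ⊗ |0,0⟩⟨0,0| + (1−λ) σ ⊗ |1,1⟩⟨1,1|` of two bipartite states with
diagonal reduced states is a density matrix with diagonal reduced states whose
coherence is exactly the corresponding convex combination of coherences. -/
theorem stmt_9 {A B : Type} [Fintype A] [DecidableEq A] [Fintype B] [DecidableEq B]
    (ρ σ : Matrix (A × B) (A × B) ℂ)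
    (hρ : ρ.PosSemidef) (hρtr : ρ.trace = 1)
    (hσ : σ.PosSemidef) (hσtr : σ.trace = 1)
    (hρA : (Matrix.of fun i k : A => ∑ j : B, ρ (i, j) (k, j)).IsDiag)
    (hρB : (Matrix.of fun j l : B => ∑ i : A, ρ (i, j) (i, l)).IsDiag)
    (hσA : (Matrix.of fun i k : A => ∑ j : B, σ (i, j) (k, j)).IsDiag)
    (hσB : (Matrix.of fun j l : B => ∑ i : A, σ (i, j) (i, l)).IsDiag)
    (l : ℝ) (hl0 : 0 ≤ l) (hl1 : l ≤ 1)
    (τ : Matrix ((A × Fin 2) × (B × Fin 2)) ((A × Fin 2) × (B × Fin 2)) ℂ)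
    (hτ : τ = Matrix.of fun p q : (A × Fin 2) × (B × Fin 2) =>
      if p.1.2 = 0 ∧ p.2.2 = 0 ∧ q.1.2 = 0 ∧ q.2.2 = 0 then
        (l : ℂ) * ρ (p.1.1, p.2.1) (q.1.1, q.2.1)
      else if p.1.2 = 1 ∧ p.2.2 = 1 ∧ q.1.2 = 1 ∧ q.2.2 = 1 then
        ((1 - l : ℝ) : ℂ) * σ (p.1.1, p.2.1) (q.1.1, q.2.1)
      else 0) :
    τ.PosSemidef ∧ τ.trace = 1 ∧
    (Matrix.of fun x x' : A × Fin 2 => ∑ y : B × Fin 2, τ (x, y) (x', y)).IsDiag ∧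
    (Matrix.of fun y y' : B × Fin 2 => ∑ x : A × Fin 2, τ (x, y) (x, y')).IsDiag ∧
    coh τ = l * coh ρ + (1 - l) * coh σ := by
  replace hτ : τ = l • ρ.flagged 0 + (1 - l) • σ.flagged 1 := by
    subst hτ
    ext p q
    simp only [of_apply, Matrix.add_apply, Matrix.smul_apply, flagged_apply, Complex.real_smul]
    split_ifs <;> simp_all
  subst hτ
  have hl1' : 0 ≤ 1 - l := sub_nonneg.2 hl1
  refine ⟨((hρ.flagged 0).smul hl0).add ((hσ.flagged 1).smul hl1'), ?_, ?_, ?_, ?_⟩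
  · simp [trace_flagged, hρtr, hσtr]
  · change (traceRight _).IsDiag
    rw [traceRight_add, traceRight_smul, traceRight_smul, traceRight_flagged, traceRight_flagged]
    exact ((hρA.kronecker (isDiag_diagonal _)).smul _).add
      ((hσA.kronecker (isDiag_diagonal _)).smul _)
  · change (traceLeft _).IsDiag
    rw [traceLeft_add, traceLeft_smul, traceLeft_smul, traceLeft_flagged, traceLeft_flagged]
    exact ((hρB.kronecker (isDiag_diagonal _)).smul _).add
      ((hσB.kronecker (isDiag_diagonal _)).smul _)
  · rw [coh_add_of_disjoint, coh_smul, coh_smul, coh_flagged, coh_flagged, abs_of_nonneg hl0,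
      abs_of_nonneg hl1']
    intro p q
    exact (flagged_apply_eq_zero_or zero_ne_one ρ σ p q).imp (by simp [·]) (by simp [·])
end

section
/- Let D and R be finite types and let ρ and σ be density matrices on (D × R) × (D × R), each unitarily symmetric: there exist unitary matrices U_ρ, V_ρ on D × R with (U_ρ ⊗ V_ρ) · (S ρ S) · (U_ρ ⊗ V_ρ)† = ρ, and unitary matrices U_σ, V_σ on D × R with (U_σ ⊗ V_σ) · (S σ S) · (U_σ ⊗ V_σ)† = σ, where S τ S denotes the swap conjugation (S τ S) (x,y) (x',y') = τ (y,x) (y',x'). Let λ be a real number with 0 ≤ λ ≤ 1 and define the flagged mixture τ on ((D × R) × Fin 2) × ((D × R) × Fin 2) by: τ ((x,a),(y,b)) ((x',a'),(y',b')) = λ · ρ (x,y) (x',y') if a = a' = b = b' = 0; (1−λ) · σ (x,y) (x',y') if a = a' = b = b' = 1; and 0 otherwise. Then τ is unitarily symmetric: there exist unitary matrices W₁, W₂ on (D × R) × Fin 2 such that (W₁ ⊗ W₂) · (S' τ S') · (W₁ ⊗ W₂)† = τ, where S' τ S' is the swap conjugation on ((D × R) × Fin 2) × ((D × R) × Fin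 2) given by (S' τ S') (u,v) (u',v') = τ (v,u) (v',u'). (Explicitly, one may take W₁ = U_ρ ⊗ E_{00} + U_σ ⊗ E_{11} and W₂ = V_ρ ⊗ E_{00} + V_σ ⊗ E_{11}.) -/
open Matrix
open scoped Kronecker ComplexOrder

lemma flag_unitary {n : Type} [Fintype n] [DecidableEq n] (A B : Matrix n n ℂ)
    (hA : A ∈ Matrix.unitaryGroup n ℂ) (hB : B ∈ Matrix.unitaryGroup n ℂ) :
    (Matrix.of fun p q : n × Fin 2 =>
      if p.2 = 0 ∧ q.2 = 0 then A p.1 q.1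
      else if p.2 = 1 ∧ q.2 = 1 then B p.1 q.1 else 0) ∈
      Matrix.unitaryGroup (n × Fin 2) ℂ := by
  rw [Matrix.mem_unitaryGroup_iff] at hA hB ⊢
  ext ⟨x,a⟩ ⟨y,b⟩
  have hA' := congrFun (congrFun hA x) y
  have hB' := congrFun (congrFun hB x) y
  simp [mul_apply, star_apply, Fintype.sum_prod_type, Fin.sum_univ_two] at hA' hB' ⊢
  fin_cases a <;> fin_cases b <;> simp_all [Matrix.one_apply, Prod.ext_iff]

lemma diag_case {D R : Type} [Fintype D] [DecidableEq D] [Fintype R] [DecidableEq R]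
    (ρ : Matrix ((D × R) × (D × R)) ((D × R) × (D × R)) ℂ)
    (Uρ Vρ : Matrix (D × R) (D × R) ℂ) (c : ℂ)
    (hρsym : (Uρ ⊗ₖ Vρ) *
        (Matrix.of fun u v : (D × R) × (D × R) => ρ (u.2, u.1) (v.2, v.1)) *
        (Uρ ⊗ₖ Vρ)ᴴ = ρ)
    (x y x' y' : D × R) :
    ∑ x_1 : D,
      ∑ y_1 : R,
        ∑ x_2 : D,
          ∑ x_3 : R,
            (∑ x_4 : D,
                ∑ x_5 : R,
                  ∑ x_6 : D,
                    ∑ x_7 : R,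
                      Uρ x (x_4, x_5) * Vρ y (x_6, x_7) *
                        (c * ρ ((x_6, x_7), x_4, x_5) ((x_2, x_3), x_1, y_1))) *
              ((starRingEnd ℂ) (Uρ x' (x_1, y_1)) * (starRingEnd ℂ) (Vρ y' (x_2, x_3))) =
    c * ρ (x, y) (x', y') := by
  have key := congrFun (congrFun hρsym ((x,y) : (D × R) × (D × R))) ((x',y') : (D × R) × (D × R))
  simp only [mul_apply, conjTranspose_apply, kroneckerMap_apply, of_apply,
    Fintype.sum_prod_type, star_apply, Fin.sum_univ_two] at key
  rw [← key]
  simp only [Finset.mul_sum, Finset.sum_mul]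
  refine Finset.sum_congr rfl fun _ _ => Finset.sum_congr rfl fun _ _ =>
    Finset.sum_congr rfl fun _ _ => Finset.sum_congr rfl fun _ _ =>
    Finset.sum_congr rfl fun _ _ => Finset.sum_congr rfl fun _ _ =>
    Finset.sum_congr rfl fun _ _ => Finset.sum_congr rfl fun _ _ => ?_
  simp only [star_mul', Complex.star_def]
  ring

set_option maxHeartbeats 4000000 in
/-- A flagged mixture of two unitarily symmetric states is again unitarily
symmetric: if `ρ` and `σ` are unitarily symmetric bipartite states on
`(D × R) × (D × R)`, then the flagged mixture `τ` (with classical flag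
registers `Fin 2` appended on each side) is unitarily symmetric. -/
theorem stmt_11 {D R : Type} [Fintype D] [DecidableEq D] [Fintype R] [DecidableEq R]
    (ρ σ : Matrix ((D × R) × (D × R)) ((D × R) × (D × R)) ℂ)
    (hρ : ρ.PosSemidef) (hρtr : ρ.trace = 1)
    (hσ : σ.PosSemidef) (hσtr : σ.trace = 1)
    (Uρ Vρ Uσ Vσ : Matrix (D × R) (D × R) ℂ)
    (hUρ : Uρ ∈ Matrix.unitaryGroup (D × R) ℂ) (hVρ : Vρ ∈ Matrix.unitaryGroup (D × R) ℂ)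
    (hUσ : Uσ ∈ Matrix.unitaryGroup (D × R) ℂ) (hVσ : Vσ ∈ Matrix.unitaryGroup (D × R) ℂ)
    (hρsym : (Uρ ⊗ₖ Vρ) *
        (Matrix.of fun u v : (D × R) × (D × R) => ρ (u.2, u.1) (v.2, v.1)) *
        (Uρ ⊗ₖ Vρ)ᴴ = ρ)
    (hσsym : (Uσ ⊗ₖ Vσ) *
        (Matrix.of fun u v : (D × R) × (D × R) => σ (u.2, u.1) (v.2, v.1)) *
        (Uσ ⊗ₖ Vσ)ᴴ = σ)
    (l : ℝ) (hl0 : 0 ≤ l) (hl1 : l ≤ 1)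
    (τ : Matrix (((D × R) × Fin 2) × ((D × R) × Fin 2))
        (((D × R) × Fin 2) × ((D × R) × Fin 2)) ℂ)
    (hτ : τ = Matrix.of fun p q : ((D × R) × Fin 2) × ((D × R) × Fin 2) =>
      if p.1.2 = 0 ∧ p.2.2 = 0 ∧ q.1.2 = 0 ∧ q.2.2 = 0 then
        (l : ℂ) * ρ (p.1.1, p.2.1) (q.1.1, q.2.1)
      else if p.1.2 = 1 ∧ p.2.2 = 1 ∧ q.1.2 = 1 ∧ q.2.2 = 1 then
        ((1 - l : ℝ) : ℂ) * σ (p.1.1, p.2.1) (q.1.1, q.2.1)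
      else 0) :
    ∃ W₁ W₂ : Matrix ((D × R) × Fin 2) ((D × R) × Fin 2) ℂ,
      W₁ ∈ Matrix.unitaryGroup ((D × R) × Fin 2) ℂ ∧
      W₂ ∈ Matrix.unitaryGroup ((D × R) × Fin 2) ℂ ∧
      (W₁ ⊗ₖ W₂) *
        (Matrix.of fun u v : ((D × R) × Fin 2) × ((D × R) × Fin 2) =>
          τ (u.2, u.1) (v.2, v.1)) *
        (W₁ ⊗ₖ W₂)ᴴ = τ := by
  refine ⟨Matrix.of fun p q : (D × R) × Fin 2 =>
      if p.2 = 0 ∧ q.2 = 0 then Uρ p.1 q.1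
      else if p.2 = 1 ∧ q.2 = 1 then Uσ p.1 q.1 else 0,
    Matrix.of fun p q : (D × R) × Fin 2 =>
      if p.2 = 0 ∧ q.2 = 0 then Vρ p.1 q.1
      else if p.2 = 1 ∧ q.2 = 1 then Vσ p.1 q.1 else 0,
    flag_unitary Uρ Uσ hUρ hUσ, flag_unitary Vρ Vσ hVρ hVσ, ?_⟩
  subst hτ
  ext ⟨⟨x,a⟩,⟨y,b⟩⟩ ⟨⟨x',a'⟩,⟨y',b'⟩⟩
  fin_cases a <;> fin_cases b <;> fin_cases a' <;> fin_cases b' <;>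
    simp [mul_apply, conjTranspose_apply, kroneckerMap_apply, Fintype.sum_prod_type,
      Fin.sum_univ_two, star_apply]
  · exact diag_case ρ Uρ Vρ (l : ℂ) hρsym x y x' y'
  · exact diag_case σ Uσ Vσ ((1 : ℂ) - (l : ℂ)) hσsym x y x' y'
end
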